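/- With the notation of the Rees valuations: the ideal IT𝓡 = 𝓡 ∩ T·R[T] is a height-one prime ideal of 𝓡 distinct from each P_i, and consequently v_i(I𝓡) = −v_i(T) for each i, i.e., I𝓡 = ⋂_{i=1}^t P_i^{(d_i)} with d_i = −v_i(T). -/

import Mathlib

open Polynomial

/-- The localization of (the image of) a ring `A` at a prime `P`, viewed as a subset of a
larger ring `L` via a ring homomorphism `f : A →+* L`. -/
def locSet {A L : Type*} [CommRing A] [CommRing L] (f : A →+* L) (P : Ideal A) : Set L :=
  {x | ∃ a b : A, b ∉ P ∧ x * f b = f a}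

/-- The `n`-th symbolic power of a prime ideal `P`: the contraction of `P^n` from the
localization at `P`. -/
noncomputable def symbPow {A : Type*} [CommRing A] (P : Ideal A) (hP : P.IsPrime)
    (n : ℕ) : Ideal A :=
  letI := hP
  Ideal.comap (algebraMap A (Localization.AtPrime P))
    (Ideal.map (algebraMap A (Localization.AtPrime P)) (P ^ n))

lemma primeSpectrum_height_eq_one {A : Type*} [CommRing A] [IsDomain A]
    (p : PrimeSpectrum A) (h0 : p.asIdeal ≠ ⊥)
    (h1 : ∀ q : PrimeSpectrum A, q < p → q.asIdeal = ⊥) : Order.height p = 1 := by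
  have hbotmin : ∀ q : PrimeSpectrum A, q.asIdeal = ⊥ → IsMin q := by
    intro q hq r hr
    show q.asIdeal ≤ r.asIdeal
    rw [hq]; exact bot_le
  have hle : Order.height p ≤ 1 := by
    rw [show ((1:ℕ∞) = (1:ℕ)) by rfl, Order.height_le_coe_iff]
    intro y hy
    have : Order.height y = 0 := (Order.height_eq_zero).mpr (hbotmin y (h1 y hy))
    rw [this]; norm_num
  have hge : (1:ℕ∞) ≤ Order.height p := by
    rw [ENat.one_le_iff_ne_zero]
    intro h
    have := (Order.height_eq_zero).mp h
    have hlt : (⟨⊥, Ideal.bot_prime⟩ : PrimeSpectrum A) < p := by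
      constructor
      · show (⊥ : Ideal A) ≤ p.asIdeal; exact bot_le
      · intro hle'
        exact h0 (le_antisymm (hle' : p.asIdeal ≤ ⊥) bot_le)
    exact absurd (this hlt.le) (not_le_of_gt hlt)
  exact le_antisymm hle hge



lemma prime_height_one_of_localized_principal {A : Type*} [CommRing A] [IsDomain A]
    [IsNoetherianRing A] (P : Ideal A) (hP : P.IsPrime) (hbot : P ≠ ⊥)
    (π : A) (hπ : π ∈ P)
    (hgen : ∀ q ∈ P, ∃ c u : A, u ∉ P ∧ q * u = π * c) :
    Order.height (⟨P, hP⟩ : PrimeSpectrum A) = 1 := by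
  classical
  set B := Localization P.primeCompl with hB
  haveI : IsDomain B := IsLocalization.isDomain_localization P.primeCompl_le_nonZeroDivisors
  haveI : IsNoetherianRing B := IsLocalization.isNoetherianRing P.primeCompl B ‹_›
  set algB := algebraMap A B with halgB
  have halginj : Function.Injective algB :=
    IsLocalization.injective B P.primeCompl_le_nonZeroDivisors
  set m := IsLocalRing.maximalIdeal B with hm
  have hmapm : Ideal.map algB P = m := Localization.AtPrime.map_eq_maximalIdeal
  set π' := algB π with hπ'
  -- m = span {π'}
  have hspan : m = Ideal.span {π'} := by
    apply le_antisymm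
    · rw [← hmapm, Ideal.map_le_iff_le_comap]
      intro q hq
      obtain ⟨c, u, hu, hqu⟩ := hgen q hq
      have huu : IsUnit (algB u) := IsLocalization.map_units B (⟨u, hu⟩ : P.primeCompl)
      show algB q ∈ Ideal.span {π'}
      rw [Ideal.mem_span_singleton]
      refine ⟨algB c * huu.unit⁻¹, ?_⟩
      have : algB q * algB u = π' * algB c := by
        rw [hπ', ← map_mul, ← map_mul, hqu]
      rw [← mul_assoc, Units.eq_mul_inv_iff_mul_eq, IsUnit.unit_spec]
      rw [mul_comm (algB q), ← this]; ring
    · rw [Ideal.span_le, Set.singleton_subset_iff, ← hmapm]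
      exact Ideal.mem_map_of_mem _ hπ
  -- every prime of B is ⊥ or m
  have hprimes : ∀ Q : Ideal B, Q.IsPrime → Q = ⊥ ∨ Q = m := by
    intro Q hQ
    by_cases hQb : Q = ⊥
    · exact Or.inl hQb
    right
    obtain ⟨w, hwQ, hw0⟩ := Submodule.exists_mem_ne_zero_of_ne_bot hQb
    have hKrull : (⨅ n : ℕ, m ^ n) = ⊥ :=
      Ideal.iInf_pow_eq_bot_of_isLocalRing m (Ideal.IsMaximal.ne_top (IsLocalRing.maximalIdeal.isMaximal B))
    have hex : ∃ n, w ∉ m ^ n := by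
      by_contra hc
      push_neg at hc
      have hmem : w ∈ (⨅ n : ℕ, m ^ n) := (Submodule.mem_iInf _).mpr hc
      rw [hKrull] at hmem
      exact hw0 hmem
    have hn₀ : w ∉ m ^ (Nat.find hex) := Nat.find_spec hex
    have hn₀pos : 0 < Nat.find hex := by
      rcases Nat.eq_zero_or_pos (Nat.find hex) with h | h
      · exfalso; apply hn₀; rw [h, pow_zero, Ideal.one_eq_top]; exact Submodule.mem_top
      · exact h
    obtain ⟨k, hk⟩ : ∃ k, Nat.find hex = k + 1 := ⟨Nat.find hex - 1, by omega⟩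
    have hwmem : w ∈ m ^ k := by
      by_contra hc
      exact hc (not_not.mp (Nat.find_min hex (show k < Nat.find hex by omega)))
    rw [hspan, Ideal.span_singleton_pow, Ideal.mem_span_singleton] at hwmem
    obtain ⟨z, hz⟩ := hwmem
    have hzunit : IsUnit z := by
      by_contra hzu
      have hzm : z ∈ m := hzu
      rw [hspan, Ideal.mem_span_singleton] at hzm
      obtain ⟨c, hc⟩ := hzm
      apply hn₀
      rw [hk, hspan, Ideal.span_singleton_pow, Ideal.mem_span_singleton]
      exact ⟨c, by rw [hz, hc, pow_succ]; ring⟩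
    -- π'^k ∈ Q
    have hπpow : π' ^ k ∈ Q := by
      have : π' ^ k * z ∈ Q := hz ▸ hwQ
      rcases hQ.mem_or_mem this with h | h
      · exact h
      · exact absurd (Q.eq_top_of_isUnit_mem h hzunit) hQ.ne_top
    have hkpos : 0 < k := by
      rcases Nat.eq_zero_or_pos k with h | h
      · exfalso
        rw [h, pow_zero] at hπpow
        exact hQ.ne_top (Q.eq_top_of_isUnit_mem hπpow isUnit_one)
      · exact h
    have hπQQ : π' ∈ Q := hQ.mem_of_pow_mem _ hπpow
    have hmq : Ideal.span {π'} ≤ Q := by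
      rw [Ideal.span_le, Set.singleton_subset_iff]; exact hπQQ
    exact le_antisymm (IsLocalRing.le_maximalIdeal hQ.ne_top) (hspan ▸ hmq)
  -- primes strictly below P are ⊥
  apply primeSpectrum_height_eq_one _ hbot
  intro q hq
  have hqP : q.asIdeal ≤ P := hq.le
  have hdisj : Disjoint (P.primeCompl : Set A) (q.asIdeal : Set A) := by
    rw [Set.disjoint_left]
    intro x hx hxq
    exact hx (hqP hxq)
  set e := IsLocalization.orderIsoOfPrime P.primeCompl B
  obtain ⟨⟨Q, hQp⟩, hQ⟩ := e.surjective ⟨q.asIdeal, q.isPrime, hdisj⟩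
  have hcomap : Ideal.comap algB Q = q.asIdeal := congrArg Subtype.val hQ
  rcases hprimes Q hQp with h | h
  · rw [h] at hcomap
    rw [← hcomap]
    rw [← RingHom.ker_eq_comap_bot]
    exact (RingHom.injective_iff_ker_eq_bot algB).mp halginj
  · exfalso
    rw [h] at hcomap
    have : Ideal.comap algB m = P := Localization.AtPrime.comap_maximalIdeal
    rw [this] at hcomap
    exact hq.ne (PrimeSpectrum.ext hcomap.symm)



lemma exists_X_pow_factor_aux {R : Type*} [CommRing R] [IsDomain R] :
    ∀ (n : ℕ) (p : R[X]), p.natDegree ≤ n → p ≠ 0 →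
      ∃ m q, p = X ^ m * q ∧ q.coeff 0 ≠ 0 := by
  intro n
  induction n with
  | zero =>
    intro p hd hp
    refine ⟨0, p, by simp, ?_⟩
    intro h0
    apply hp
    have := Polynomial.eq_C_of_natDegree_le_zero hd
    rw [this, h0, map_zero]
  | succ n ih =>
    intro p hd hp
    by_cases h0 : p.coeff 0 ≠ 0
    · exact ⟨0, p, by simp, h0⟩
    push_neg at h0
    obtain ⟨q, hq⟩ := (Polynomial.X_dvd_iff).mpr h0
    have hq0 : q ≠ 0 := fun h => hp (by rw [hq, h, mul_zero])
    have hdq : q.natDegree ≤ n := by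
      have := Polynomial.natDegree_mul (Polynomial.X_ne_zero (R := R)) hq0
      rw [← hq, Polynomial.natDegree_X] at this
      omega
    obtain ⟨m, q', hq', h0'⟩ := ih q hdq hq0
    exact ⟨m + 1, q', by rw [hq, hq', pow_succ]; ring, h0'⟩

lemma exists_X_pow_factor {R : Type*} [CommRing R] [IsDomain R] (p : R[X]) (hp : p ≠ 0) :
    ∃ m q, p = X ^ m * q ∧ q.coeff 0 ≠ 0 :=
  exists_X_pow_factor_aux p.natDegree p le_rfl hp

lemma C_pow_mul_mem_reesAlgebra {R : Type*} [CommRing R] {I : Ideal R} {a : R} (haI : a ∈ I)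
    (p : R[X]) {N : ℕ} (hN : p.natDegree ≤ N) : (C a) ^ N * p ∈ reesAlgebra I := by
  rw [mem_reesAlgebra_iff]
  intro i
  rw [← C_pow, coeff_C_mul]
  by_cases hi : i ≤ N
  · have : a ^ N ∈ I ^ i := Ideal.pow_le_pow_right hi (Ideal.pow_mem_pow haI _)
    exact Ideal.mul_mem_right _ _ this
  · rw [p.coeff_eq_zero_of_natDegree_lt (by omega), mul_zero]
    exact zero_mem _

lemma monomial_mem_map {R : Type*} [CommRing R] (I : Ideal R) (m : ℕ) :
    ∀ c ∈ I * I ^ m, (monomial m c ∈ reesAlgebra I) ∧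
      ∀ y : ↥(reesAlgebra I), (y : R[X]) = monomial m c →
        y ∈ Ideal.map (algebraMap R ↥(reesAlgebra I)) I := by
  intro c hc
  refine Submodule.mul_induction_on hc ?_ ?_
  · intro x hx b hb
    have hmem : monomial m (x * b) ∈ reesAlgebra I :=
      reesAlgebra.monomial_mem.mpr (Ideal.mul_mem_left _ _ hb)
    refine ⟨hmem, ?_⟩
    intro y hy
    have hb' : monomial m b ∈ reesAlgebra I := reesAlgebra.monomial_mem.mpr hb
    have hyz : y = algebraMap R ↥(reesAlgebra I) x * ⟨monomial m b, hb'⟩ := by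
      apply Subtype.ext
      rw [hy]
      show monomial m (x * b) = C x * monomial m b
      rw [C_mul_monomial]
    rw [hyz]
    exact Ideal.mul_mem_right _ _ (Ideal.mem_map_of_mem _ hx)
  · intro c₁ c₂ h₁ h₂
    have hmem : monomial m (c₁ + c₂) ∈ reesAlgebra I := by
      rw [map_add]
      exact add_mem h₁.1 h₂.1
    refine ⟨hmem, ?_⟩
    intro y hy
    have : y = (⟨monomial m c₁, h₁.1⟩ : ↥(reesAlgebra I)) + ⟨monomial m c₂, h₂.1⟩ := by
      apply Subtype.ext
      rw [hy]
      show monomial m (c₁ + c₂) = monomial m c₁ + monomial m c₂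
      rw [map_add]
    rw [this]
    exact Ideal.add_mem _ (h₁.2 _ rfl) (h₂.2 _ rfl)

lemma mem_map_of_coeff_aux {R : Type*} [CommRing R] (I : Ideal R) :
    ∀ (n : ℕ) (x : ↥(reesAlgebra I)), ((x : R[X]).support.card ≤ n) →
      (∀ m, (x : R[X]).coeff m ∈ I ^ (m + 1)) →
      x ∈ Ideal.map (algebraMap R ↥(reesAlgebra I)) I := by
  intro n
  induction n with
  | zero =>
    intro x hcard _
    have : (x : R[X]) = 0 := by
      rwa [Nat.le_zero, Finset.card_eq_zero, Polynomial.support_eq_empty] at hcard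
    have : x = 0 := Subtype.ext this
    rw [this]
    exact Ideal.zero_mem _
  | succ n ih =>
    intro x hcard h
    by_cases hx0 : (x : R[X]) = 0
    · have hxz : x = 0 := Subtype.ext (by simpa using hx0)
      rw [hxz]
      exact Ideal.zero_mem _
    set p : R[X] := (x : R[X]) with hp
    set nd := p.natDegree with hnd
    set c := p.coeff nd with hc
    have hcI : c ∈ I * I ^ nd := by
      have h1 : c ∈ I ^ (nd + 1) := h nd
      rwa [pow_succ, mul_comm (I ^ nd) I] at h1
    obtain ⟨hmem, hmap⟩ := monomial_mem_map I nd c hcI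
    set ymon : ↥(reesAlgebra I) := ⟨monomial nd c, hmem⟩ with hymon
    have hymap : ymon ∈ Ideal.map (algebraMap R ↥(reesAlgebra I)) I := hmap _ rfl
    set rest := x - ymon with hrest
    have hrestval : (rest : R[X]) = p.eraseLead := by
      show p - monomial nd c = p.eraseLead
      exact p.self_sub_monomial_natDegree_leadingCoeff
    have hrestcard : (rest : R[X]).support.card ≤ n := by
      rw [hrestval]
      have := Polynomial.eraseLead_support_card_lt hx0
      omega
    have hrestco : ∀ m, (rest : R[X]).coeff m ∈ I ^ (m + 1) := by
      intro m
      show (p - monomial nd c).coeff m ∈ I ^ (m + 1)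
      rw [Polynomial.coeff_sub, Polynomial.coeff_monomial]
      by_cases hm : nd = m
      · rw [if_pos hm]
        exact Ideal.sub_mem _ (h m) (hm ▸ h nd)
      · rw [if_neg hm, sub_zero]
        exact h m
    have hxsum : x = ymon + rest := by ring
    rw [hxsum]
    exact Ideal.add_mem _ hymap (ih rest hrestcard hrestco)

lemma mem_map_of_coeff {R : Type*} [CommRing R] (I : Ideal R) (x : ↥(reesAlgebra I))
    (h : ∀ m, (x : R[X]).coeff m ∈ I ^ (m + 1)) :
    x ∈ Ideal.map (algebraMap R ↥(reesAlgebra I)) I :=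
  mem_map_of_coeff_aux I (x : R[X]).support.card x le_rfl h



lemma reesAlgebra_isFractionRing {R : Type*} [CommRing R] [IsDomain R] {I : Ideal R}
    (a : R) (haI : a ∈ I) (ha : a ≠ 0) :
    @IsFractionRing ↥(reesAlgebra I) _ (FractionRing R[X]) _
      (((algebraMap R[X] (FractionRing R[X])).comp (reesAlgebra I).val.toRingHom).toAlgebra) := by
  set L := FractionRing R[X] with hL
  set f := (algebraMap R[X] L).comp (reesAlgebra I).val.toRingHom with hf
  letI : Algebra ↥(reesAlgebra I) L := f.toAlgebra
  have halg : algebraMap ↥(reesAlgebra I) L = f := rfl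
  have hPinj : Function.Injective (algebraMap R[X] L) := IsFractionRing.injective R[X] L
  have hinj : Function.Injective f := by
    intro x y hxy
    exact Subtype.ext (hPinj hxy)
  refine ⟨?_, ?_, ?_⟩
  · rintro ⟨y, hy⟩
    have hy0 : y ≠ 0 := nonZeroDivisors.ne_zero hy
    have : f y ≠ 0 := fun hh => hy0 (hinj (by rwa [map_zero]))
    exact isUnit_iff_ne_zero.mpr (by rwa [halg])
  · intro z
    obtain ⟨⟨p, q⟩, hpq⟩ := IsLocalization.surj (nonZeroDivisors R[X]) z
    set N := max p.natDegree (q : R[X]).natDegree with hN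
    have hnum : (C a) ^ N * p ∈ reesAlgebra I :=
      C_pow_mul_mem_reesAlgebra haI p (le_max_left _ _)
    have hden : (C a) ^ N * (q : R[X]) ∈ reesAlgebra I :=
      C_pow_mul_mem_reesAlgebra haI _ (le_max_right _ _)
    have hq0 : (q : R[X]) ≠ 0 := nonZeroDivisors.ne_zero q.2
    have hden0 : (⟨(C a) ^ N * (q : R[X]), hden⟩ : ↥(reesAlgebra I)) ≠ 0 := by
      intro hh
      have : (C a) ^ N * (q : R[X]) = 0 := congrArg Subtype.val hh
      exact (mul_ne_zero (pow_ne_zero _ (Polynomial.C_ne_zero.mpr ha)) hq0) this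
    refine ⟨⟨⟨(C a) ^ N * p, hnum⟩, ⟨_, mem_nonZeroDivisors_of_ne_zero hden0⟩⟩, ?_⟩
    rw [halg]
    show z * f ⟨(C a) ^ N * (q : R[X]), hden⟩ = f ⟨(C a) ^ N * p, hnum⟩
    have h1 : f ⟨(C a) ^ N * (q : R[X]), hden⟩ =
        algebraMap R[X] L ((C a) ^ N) * algebraMap R[X] L (q : R[X]) := by
      rw [hf]; simp [map_mul]
    have h2 : f ⟨(C a) ^ N * p, hnum⟩ =
        algebraMap R[X] L ((C a) ^ N) * algebraMap R[X] L p := by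
      rw [hf]; simp [map_mul]
    rw [h1, h2, ← hpq]; ring
  · intro x y hxy
    rw [halg] at hxy
    exact ⟨1, by rw [hinj hxy]⟩

lemma rees_Q_prime_height {R : Type*} [CommRing R] [IsDomain R] (I : Ideal R)
    (a : R) (haI : a ∈ I) (ha : a ≠ 0) :
    ∃ hQ : (Ideal.comap (reesAlgebra I).val.toRingHom
        (Ideal.span {(X : R[X])})).IsPrime,
      Order.height (⟨Ideal.comap (reesAlgebra I).val.toRingHom
          (Ideal.span {(X : R[X])}), hQ⟩ : PrimeSpectrum ↥(reesAlgebra I)) = 1 := by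
  classical
  set Q := Ideal.comap (reesAlgebra I).val.toRingHom (Ideal.span {(X : R[X])}) with hQdef
  have hmemQ : ∀ x : ↥(reesAlgebra I), x ∈ Q ↔ (x : R[X]).coeff 0 = 0 := by
    intro x
    rw [hQdef, Ideal.mem_comap, Ideal.mem_span_singleton]
    exact Polynomial.X_dvd_iff
  have hker : Q = RingHom.ker ((constantCoeff (R := R)).comp (reesAlgebra I).val.toRingHom) := by
    ext x
    rw [hmemQ, RingHom.mem_ker]
    rfl
  have hQprime : Q.IsPrime := by
    rw [hker]
    exact RingHom.ker_isPrime _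
  refine ⟨hQprime, ?_⟩
  -- a * X element
  have haX : C a * X ∈ reesAlgebra I := by
    rw [Polynomial.C_mul_X_eq_monomial, reesAlgebra.monomial_mem, pow_one]
    exact haI
  set aX : ↥(reesAlgebra I) := ⟨C a * X, haX⟩ with haXdef
  have haXQ : aX ∈ Q := by
    rw [hmemQ]
    have : ((aX : ↥(reesAlgebra I)) : R[X]) = C a * X := rfl
    rw [this]
    simp
  have haX0 : aX ≠ 0 := by
    intro hh
    have : C a * X = 0 := congrArg Subtype.val hh
    exact (mul_ne_zero (Polynomial.C_ne_zero.mpr ha) Polynomial.X_ne_zero) this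
  have hCa : ((algebraMap R ↥(reesAlgebra I) a : ↥(reesAlgebra I)) : R[X]) = C a := rfl
  have hCaQ : (algebraMap R ↥(reesAlgebra I) a) ∉ Q := by
    rw [hmemQ, hCa]
    simpa using ha
  -- factorization helper
  have hfac : ∀ x : ↥(reesAlgebra I), x ∈ Q → x ≠ 0 →
      ∃ (m : ℕ) (u : ↥(reesAlgebra I)), 1 ≤ m ∧ (u : R[X]).coeff 0 ≠ 0 ∧
        (algebraMap R ↥(reesAlgebra I) a) ^ m * x = aX ^ m * u := by
    intro x hxQ hx0
    have hxv0 : (x : R[X]) ≠ 0 := fun hh => hx0 (Subtype.ext (by simpa using hh))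
    obtain ⟨m, u, hu, hu0⟩ := exists_X_pow_factor (x : R[X]) hxv0
    have humem : u ∈ reesAlgebra I := by
      rw [mem_reesAlgebra_iff]
      intro i
      have h1 : (x : R[X]).coeff (i + m) ∈ I ^ (i + m) := x.2 (i + m)
      rw [hu, Polynomial.coeff_X_pow_mul] at h1
      exact Ideal.pow_le_pow_right (Nat.le_add_right _ _) h1
    have hm1 : 1 ≤ m := by
      by_contra hm
      push_neg at hm
      interval_cases m
      apply hu0
      have : (x : R[X]).coeff 0 = 0 := (hmemQ x).mp hxQ
      rwa [hu, pow_zero, one_mul] at this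
    refine ⟨m, ⟨u, humem⟩, hm1, hu0, ?_⟩
    apply Subtype.ext
    show (C a) ^ m * (x : R[X]) = (C a * X) ^ m * u
    rw [hu, mul_pow]; ring
  apply primeSpectrum_height_eq_one
  · intro hh
    have hb : Q = ⊥ := hh
    rw [hb] at haXQ
    exact haX0 ((Submodule.mem_bot _).mp haXQ)
  · intro q hq
    by_contra hqb
    obtain ⟨p₀, hp₀q, hp₀⟩ := Submodule.exists_mem_ne_zero_of_ne_bot hqb
    have hqQ : q.asIdeal ≤ Q := hq.le
    obtain ⟨m₀, u₀, hm₀, hu₀0, heq₀⟩ := hfac p₀ (hqQ hp₀q) hp₀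
    have hu₀Q : u₀ ∉ q.asIdeal := by
      intro hh
      exact (by rw [hmemQ u₀]; exact fun h2 => hu₀0 h2 : u₀ ∉ Q) (hqQ hh)
    -- aX ∈ q
    have haXq : aX ∈ q.asIdeal := by
      have h1 : aX ^ m₀ * u₀ ∈ q.asIdeal := by
        rw [← heq₀]
        exact Ideal.mul_mem_left _ _ hp₀q
      have h2 : aX ^ m₀ ∈ q.asIdeal := by
        rcases q.isPrime.mem_or_mem h1 with h | h
        · exact h
        · exact absurd h hu₀Q
      exact q.isPrime.mem_of_pow_mem _ h2
    -- Q ≤ q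
    have hCaq : (algebraMap R ↥(reesAlgebra I) a) ∉ q.asIdeal :=
      fun hh => hCaQ (hqQ hh)
    have hQq : Q ≤ q.asIdeal := by
      intro x hxQ
      rcases eq_or_ne x 0 with h | h
      · rw [h]; exact Ideal.zero_mem _
      obtain ⟨m, u, hm, hu0, heq⟩ := hfac x hxQ h
      have h1 : aX ^ m * u ∈ q.asIdeal :=
        Ideal.mul_mem_right _ _ (Ideal.pow_mem_of_mem _ haXq _ hm)
      rw [← heq] at h1
      rcases q.isPrime.mem_or_mem h1 with h2 | h2
      · exact absurd (q.isPrime.mem_of_pow_mem _ h2) hCaq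
      · exact h2
    have hle : (⟨Q, hQprime⟩ : PrimeSpectrum ↥(reesAlgebra I)) ≤ q := hQq
    exact absurd hle (not_le_of_gt hq)



lemma symbPow_eq_val {A L : Type*} [CommRing A] [IsDomain A] [Field L] [Algebra A L]
    (hinj : Function.Injective (algebraMap A L))
    (P : Ideal A) (hP : P.IsPrime) (v : L → ℤ)
    (hvmul : ∀ x y : L, x ≠ 0 → y ≠ 0 → v (x*y) = v x + v y)
    (hvadd : ∀ x y : L, x ≠ 0 → y ≠ 0 → x + y ≠ 0 → min (v x) (v y) ≤ v (x+y))
    (hvsurj : ∀ z : ℤ, ∃ x : L, x ≠ 0 ∧ v x = z)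
    (hvring : {x : L | x ≠ 0 ∧ 0 ≤ v x} = locSet (algebraMap A L) P \ {0})
    (d : ℕ) (x : A) :
    x ∈ symbPow P hP d ↔ (x = 0 ∨ (d : ℤ) ≤ v (algebraMap A L x)) := by
  classical
  haveI := hP
  set f := algebraMap A L with hfdef
  have hf0 : ∀ {r : A}, f r = 0 ↔ r = 0 := by
    intro r
    constructor
    · intro h; exact hinj (by rwa [map_zero])
    · intro h; rw [h, map_zero]
  have hone : (1 : A) ∉ P := fun h => hP.ne_top (Ideal.eq_top_iff_one P |>.mpr h)
  have v1 : v 1 = 0 := by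
    have := hvmul 1 1 one_ne_zero one_ne_zero
    simp at this; omega
  have hvinv : ∀ x : L, x ≠ 0 → v x⁻¹ = - v x := by
    intro x hx
    have := hvmul x x⁻¹ hx (inv_ne_zero hx)
    rw [mul_inv_cancel₀ hx, v1] at this; omega
  have hmemloc : ∀ x : L, x ≠ 0 → (x ∈ locSet f P ↔ 0 ≤ v x) := by
    intro x hx
    constructor
    · intro h
      have h2 : x ∈ locSet f P \ {0} := ⟨h, hx⟩
      rw [← hvring] at h2; exact h2.2
    · intro h
      have h2 : x ∈ {x : L | x ≠ 0 ∧ 0 ≤ v x} := ⟨hx, h⟩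
      rw [hvring] at h2; exact h2.1
  have halg_loc : ∀ r : A, f r ∈ locSet f P :=
    fun r => ⟨r, 1, hone, by rw [map_one, mul_one]⟩
  have hvalg : ∀ r : A, r ≠ 0 → 0 ≤ v (f r) :=
    fun r hr => (hmemloc _ (fun h => hr (hf0.mp h))).mp (halg_loc r)
  have hvunit : ∀ s : A, s ∉ P → v (f s) = 0 := by
    intro s hs
    have hs0 : s ≠ 0 := fun h => hs (h ▸ P.zero_mem)
    have hfs0 : f s ≠ 0 := fun h => hs0 (hf0.mp h)
    have h1 : 0 ≤ v (f s) := hvalg s hs0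
    have h2 : (f s)⁻¹ ∈ locSet f P :=
      ⟨1, s, hs, by rw [inv_mul_cancel₀ hfs0, map_one]⟩
    have h3 := (hmemloc _ (inv_ne_zero hfs0)).mp h2
    rw [hvinv _ hfs0] at h3; omega
  have hvmemP : ∀ p ∈ P, p ≠ 0 → 1 ≤ v (f p) := by
    intro p hp hp0
    have hfp0 : f p ≠ 0 := fun h => hp0 (hf0.mp h)
    have h1 := hvalg p hp0
    by_contra hlt
    push_neg at hlt
    have hv0 : v (f p) = 0 := by omega
    have h2 : (f p)⁻¹ ∈ locSet f P := by
      refine (hmemloc _ (inv_ne_zero hfp0)).mpr ?_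
      rw [hvinv _ hfp0, hv0]
      norm_num
    obtain ⟨r, s, hs, heq⟩ := h2
    have h3 : f s = f (r * p) := by
      rw [map_mul]
      calc f s = (f p)⁻¹ * f s * f p := by field_simp
        _ = f r * f p := by rw [heq]
    exact hs (by rw [hinj h3]; exact P.mul_mem_left r hp)
  -- powers
  have hpowv : ∀ (e : ℕ) (p : A), p ∈ P ^ e → p = 0 ∨ (e : ℤ) ≤ v (f p) := by
    intro e
    induction e with
    | zero =>
      intro p _
      rcases eq_or_ne p 0 with h | h
      · exact Or.inl h
      · exact Or.inr (by simpa using hvalg p h)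
    | succ e ih =>
      intro p hp
      rw [pow_succ] at hp
      -- p ∈ P^e * P
      refine Submodule.mul_induction_on hp ?_ ?_
      · intro r hr s hs
        rcases eq_or_ne r 0 with h | h
        · left; rw [h, zero_mul]
        rcases eq_or_ne s 0 with h' | h'
        · left; rw [h', mul_zero]
        right
        rcases ih r hr with h'' | h''
        · exact absurd h'' h
        have hfr : f r ≠ 0 := fun hh => h (hf0.mp hh)
        have hfs : f s ≠ 0 := fun hh => h' (hf0.mp hh)
        rw [map_mul, hvmul _ _ hfr hfs]
        have := hvmemP s hs h'
        push_cast
        omega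
      · intro a b ha hb
        rcases eq_or_ne (a + b) 0 with h | h
        · exact Or.inl h
        right
        rcases eq_or_ne a 0 with h' | h'
        · rcases hb with h'' | h''
          · exact absurd (by rw [h', h'', add_zero]) h
          · rw [h', zero_add]; exact h''
        rcases eq_or_ne b 0 with h'' | h''
        · rcases ha with h3 | h3
          · exact absurd h3 h'
          · rw [h'', add_zero]; exact h3
        rcases ha with h3 | h3
        · exact absurd h3 h'
        rcases hb with h4 | h4
        · exact absurd h4 h''
        have hfa : f a ≠ 0 := fun hh => h' (hf0.mp hh)
        have hfb : f b ≠ 0 := fun hh => h'' (hf0.mp hh)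
        have hfab : f a + f b ≠ 0 := by rw [← map_add]; exact fun hh => h (hf0.mp hh)
        have := hvadd (f a) (f b) hfa hfb hfab
        rw [map_add]
        omega
  constructor
  · -- forward
    intro hx
    rcases eq_or_ne x 0 with h | h
    · exact Or.inl h
    right
    have hx' : algebraMap A (Localization.AtPrime P) x ∈
        Ideal.map (algebraMap A (Localization.AtPrime P)) (P ^ d) := hx
    rw [IsLocalization.mem_map_algebraMap_iff P.primeCompl] at hx'
    obtain ⟨⟨p, s⟩, hps⟩ := hx'
    rw [← map_mul] at hps
    have hxs : x * (s : A) = (p : A) := IsLocalization.injective _ P.primeCompl_le_nonZeroDivisors hps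
    have hs0 : (s : A) ≠ 0 := fun hh => s.2 (hh ▸ P.zero_mem)
    have hp0 : (p : A) ≠ 0 := by
      rw [← hxs]; exact mul_ne_zero h hs0
    rcases hpowv d p p.2 with h' | h'
    · exact absurd h' hp0
    have : v (f (x * s)) = v (f x) + v (f s) := by
      rw [map_mul]
      exact hvmul _ _ (fun hh => h (hf0.mp hh)) (fun hh => hs0 (hf0.mp hh))
    rw [hxs] at this
    rw [hvunit s s.2] at this
    omega
  · -- backward
    intro hx
    rcases eq_or_ne x 0 with h | h
    · rw [h]; exact (symbPow P hP d).zero_mem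
    rcases hx with h' | hv
    · exact absurd h' h
    have hfx0 : f x ≠ 0 := fun hh => h (hf0.mp hh)
    obtain ⟨π, hπ0, hπ1⟩ := hvsurj 1
    have hπloc : π ∈ locSet f P := (hmemloc π hπ0).mpr (by omega)
    obtain ⟨rπ, sπ, hsπ, hπeq⟩ := hπloc
    have hsπ0 : sπ ≠ 0 := fun h2 => hsπ (h2 ▸ P.zero_mem)
    have hfsπ0 : f sπ ≠ 0 := fun hh => hsπ0 (hf0.mp hh)
    have hfrπ0 : f rπ ≠ 0 := by rw [← hπeq]; exact mul_ne_zero hπ0 hfsπ0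
    have hvrπ : v (f rπ) = 1 := by
      rw [← hπeq, hvmul π (f sπ) hπ0 hfsπ0, hπ1, hvunit sπ hsπ]
      norm_num
    have hrπP : rπ ∈ P := by
      by_contra hh
      rw [hvunit rπ hh] at hvrπ; omega
    have hvpow : ∀ n : ℕ, v (π ^ n) = n := by
      intro n
      induction n with
      | zero => simpa using v1
      | succ n ih =>
        rw [pow_succ, hvmul _ _ (pow_ne_zero _ hπ0) hπ0, ih, hπ1]
        push_cast; ring
    set Loc := Localization.AtPrime P with hLoc
    set algL := algebraMap A Loc with halgL
    have hunits : ∀ s : P.primeCompl, IsUnit (f s) := by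
      intro s
      have hs0 : (s : A) ≠ 0 := fun h2 => s.2 (h2 ▸ P.zero_mem)
      exact isUnit_iff_ne_zero.mpr (fun hh => hs0 (hf0.mp hh))
    set φ : Loc →+* L := IsLocalization.lift hunits with hφdef
    have hφa : ∀ r : A, φ (algL r) = f r := fun r => IsLocalization.lift_eq hunits r
    have hφinj : Function.Injective φ := by
      rw [injective_iff_map_eq_zero]
      intro z hz
      obtain ⟨⟨r, s⟩, hrs : IsLocalization.mk' Loc r s = z⟩ := IsLocalization.mk'_surjective P.primeCompl z
      have hspec : z * algL s = algL r := by rw [← hrs]; exact IsLocalization.mk'_spec Loc r s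
      have h2 : φ z * f s = f r := by
        have := congrArg φ hspec
        rwa [map_mul, hφa, hφa] at this
      rw [hz, zero_mul] at h2
      have : r = 0 := hf0.mp h2.symm
      rw [← hrs, this, IsLocalization.mk'_zero]
    set w := IsLocalization.mk' Loc rπ (⟨sπ, hsπ⟩ : P.primeCompl) with hw
    have hwmem : w ∈ Ideal.map algL P := by
      rw [hw, IsLocalization.mk'_eq_mul_mk'_one]
      exact Ideal.mul_mem_right _ _ (Ideal.mem_map_of_mem _ hrπP)
    have hφw : φ w = π := by
      have hspec : w * algL sπ = algL rπ := IsLocalization.mk'_spec Loc rπ _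
      have h2 : φ w * f sπ = f rπ := by
        have := congrArg φ hspec
        rwa [map_mul, hφa, hφa] at this
      rw [← hπeq] at h2
      exact mul_right_cancel₀ hfsπ0 h2
    have hπd0 : π ^ d ≠ 0 := pow_ne_zero _ hπ0
    set u := f x * (π ^ d)⁻¹ with hu
    have hu0 : u ≠ 0 := mul_ne_zero hfx0 (inv_ne_zero hπd0)
    have hvu : 0 ≤ v u := by
      rw [hu, hvmul _ _ hfx0 (inv_ne_zero hπd0), hvinv _ hπd0, hvpow d]
      omega
    obtain ⟨ru, su, hsu, huequ⟩ := (hmemloc u hu0).mpr hvu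
    have hkey : algL x * algL su = w ^ d * algL ru := by
      apply hφinj
      rw [map_mul, map_mul, map_pow, hφa, hφa, hφa, hφw]
      rw [← huequ, hu]
      rw [show π ^ d * (f x * (π ^ d)⁻¹ * f su) = (π ^ d * (π ^ d)⁻¹) * (f x * f su) by ring,
        mul_inv_cancel₀ hπd0, one_mul]
    have hdmem : algL x * algL su ∈ (Ideal.map algL P) ^ d := by
      rw [hkey]
      exact Ideal.mul_mem_right _ _ (Ideal.pow_mem_pow hwmem d)
    have hsuunit : IsUnit (algL su) := IsLocalization.map_units Loc (⟨su, hsu⟩ : P.primeCompl)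
    obtain ⟨z, hz⟩ := isUnit_iff_exists_inv.mp hsuunit
    show algL x ∈ Ideal.map algL (P ^ d)
    rw [Ideal.map_pow]
    have : algL x = algL x * algL su * z := by rw [mul_assoc, hz, mul_one]
    rw [this]
    exact Ideal.mul_mem_right _ _ hdmem



lemma div_mem_of_height_one {A L : Type*} [CommRing A] [IsDomain A] [IsNoetherianRing A]
    [IsIntegrallyClosed A] [Field L] [Algebra A L] [IsFractionRing A L]
    (a b : A) (ha : a ≠ 0) (y : L) (hy : y * algebraMap A L a = algebraMap A L b)
    (h : ∀ (P : Ideal A) (hPp : P.IsPrime),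
      Order.height (⟨P, hPp⟩ : PrimeSpectrum A) = 1 → y ∈ locSet (algebraMap A L) P) :
    ∃ c : A, y = algebraMap A L c := by
  classical
  set f := algebraMap A L with hfdef
  have hinj : Function.Injective f := IsFractionRing.injective A L
  have hf0 : ∀ {r : A}, f r = 0 ↔ r = 0 := by
    intro r
    constructor
    · intro hh; exact hinj (by rwa [map_zero])
    · intro hh; rw [hh, map_zero]
  have hfa0 : f a ≠ 0 := fun hh => ha (hf0.mp hh)
  by_contra hcon
  push_neg at hcon
  have hbnot : b ∉ Ideal.span {a} := by
    intro hb
    rw [Ideal.mem_span_singleton] at hb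
    obtain ⟨c, hcc⟩ := hb
    apply hcon c
    have h2 : y * f a = f c * f a := by rw [hy, hcc, map_mul]; ring
    exact mul_right_cancel₀ hfa0 h2
  set M := A ⧸ Ideal.span {a} with hM
  set bb : M := Ideal.Quotient.mk _ b with hbb
  have hbb0 : bb ≠ 0 := by rwa [hbb, Ne, Ideal.Quotient.eq_zero_iff_mem]
  obtain ⟨P, hassoc, hann⟩ := exists_le_isAssociatedPrime_of_isNoetherianRing A bb hbb0
  obtain ⟨hPp, zz, hz⟩ := isAssociatedPrime_iff.mp hassoc
  have hsmul : ∀ (r c : A), r • (Ideal.Quotient.mk (Ideal.span {a}) c : M) =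
      Ideal.Quotient.mk _ (r * c) := by
    intro r c
    rfl
  have hannb : ∀ r : A, r * b ∈ Ideal.span {a} → r ∈ P := by
    intro r hr
    apply hann
    rw [Submodule.mem_colon_singleton, Submodule.mem_bot, hbb, hsmul,
      Ideal.Quotient.eq_zero_iff_mem]
    exact hr
  obtain ⟨m, hm⟩ := Ideal.Quotient.mk_surjective zz
  have hPm : ∀ r : A, r ∈ P ↔ r * m ∈ Ideal.span {a} := by
    intro r
    rw [hz, ← hm, Submodule.mem_colon_singleton, Submodule.mem_bot, hsmul,
      Ideal.Quotient.eq_zero_iff_mem]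
  have hm0 : m ∉ Ideal.span {a} := by
    intro hmm
    exact hPp.ne_top (Ideal.eq_top_iff_one P |>.mpr ((hPm 1).mpr (by rwa [one_mul])))
  have haP : a ∈ P := (hPm a).mpr (Ideal.mem_span_singleton.mpr (dvd_mul_right a m))
  have hP0 : P ≠ ⊥ := by
    intro hh
    rw [hh] at haP
    exact ha ((Submodule.mem_bot A).mp haP)
  set z : L := f m * (f a)⁻¹ with hzdef
  have hza : z * f a = f m := by
    rw [hzdef, mul_assoc, inv_mul_cancel₀ hfa0, mul_one]
  have hznot : ∀ c : A, z ≠ f c := by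
    intro c hzc
    apply hm0
    rw [Ideal.mem_span_singleton]
    refine ⟨c, ?_⟩
    apply hinj
    rw [map_mul, ← hza, hzc]; ring
  have hPz : ∀ p ∈ P, ∃ cp : A, f p * z = f cp := by
    intro p hp
    have h2 := (hPm p).mp hp
    rw [Ideal.mem_span_singleton] at h2
    obtain ⟨cp, hcp⟩ := h2
    refine ⟨cp, ?_⟩
    have h3 : f p * (z * f a) = f cp * f a := by
      rw [hza, ← map_mul, ← map_mul, hcp, mul_comm a cp]
    have h4 : (f p * z) * f a = f cp * f a := by rw [← h3]; ring
    exact mul_right_cancel₀ hfa0 h4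
  by_cases hcase : ∀ p ∈ P, ∀ cp : A, f p * z = f cp → cp ∈ P
  · set N : Submodule A L := Submodule.map (Algebra.linearMap A L) P with hN
    have hNbot : N ≠ ⊥ := by
      intro hh
      have : f a ∈ N := ⟨a, haP, rfl⟩
      rw [hh] at this
      exact hfa0 ((Submodule.mem_bot A).mp this)
    have hNfg : N.FG := (IsNoetherian.noetherian P).map _
    have hstab : ∀ w ∈ N, z • w ∈ N := by
      rintro w ⟨p, hp, rfl⟩
      obtain ⟨cp, hcp⟩ := hPz p hp
      refine ⟨cp, hcase p hp cp hcp, ?_⟩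
      show f cp = z • f p
      rw [smul_eq_mul, ← hcp]; ring
    have hint : IsIntegral A z := isIntegral_of_smul_mem_submodule N hNbot hNfg z hstab
    obtain ⟨c, hcc⟩ := IsIntegrallyClosed.isIntegral_iff.mp hint
    exact hznot c hcc.symm
  · push_neg at hcase
    obtain ⟨p₀, hp₀, u, hu1, hu2⟩ := hcase
    have hgen : ∀ q ∈ P, ∃ c u' : A, u' ∉ P ∧ q * u' = p₀ * c := by
      intro q hq
      obtain ⟨cq, hcq⟩ := hPz q hq
      refine ⟨cq, u, hu2, ?_⟩
      apply hinj
      rw [map_mul, map_mul, ← hu1, ← hcq]; ring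
    have hht := prime_height_one_of_localized_principal P hPp hP0 p₀ hp₀ hgen
    obtain ⟨r, s, hs, hrs⟩ := h P hPp hht
    apply hs
    apply hannb
    rw [Ideal.mem_span_singleton]
    refine ⟨r, ?_⟩
    apply hinj
    rw [map_mul, map_mul, ← hy, ← hrs]; ring

set_option maxHeartbeats 1000000 in
/-- With `R`, `I`, the height-one primes `P i` of the normal Rees algebra `𝓡` containing
`I𝓡` and the Rees valuations `v i` as usual: the ideal `IT𝓡 = 𝓡 ∩ T·R[T]` is a
height-one prime of `𝓡` distinct from every `P i`, and consequently
`I𝓡 = ⋂ i, (P i)^{(d i)}` with `d i = -(v i T)`. -/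
theorem ITR_prime_and_IR_symbolic_decomposition
    {R : Type*} [CommRing R] [IsDomain R] [IsNoetherianRing R] [IsIntegrallyClosed R]
    (I : Ideal R)
    (hht : 2 ≤ ⨅ (p : PrimeSpectrum R) (_ : I ≤ p.asIdeal), Order.height p)
    [IsIntegrallyClosed ↥(reesAlgebra I)]
    (t : ℕ) (P : Fin t → Ideal ↥(reesAlgebra I)) (hP : ∀ i, (P i).IsPrime)
    (hP1 : ∀ i, Order.height (⟨P i, hP i⟩ : PrimeSpectrum ↥(reesAlgebra I)) = 1)
    (hPI : ∀ i, Ideal.map (algebraMap R ↥(reesAlgebra I)) I ≤ P i)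
    (hall : ∀ (Q : Ideal ↥(reesAlgebra I)) (hQ : Q.IsPrime),
      Order.height (⟨Q, hQ⟩ : PrimeSpectrum ↥(reesAlgebra I)) = 1 →
      Ideal.map (algebraMap R ↥(reesAlgebra I)) I ≤ Q → ∃ i, Q = P i)
    (v : Fin t → FractionRing (Polynomial R) → ℤ)
    (hvmul : ∀ i, ∀ x y : FractionRing (Polynomial R), x ≠ 0 → y ≠ 0 →
      v i (x * y) = v i x + v i y)
    (hvadd : ∀ i, ∀ x y : FractionRing (Polynomial R), x ≠ 0 → y ≠ 0 → x + y ≠ 0 →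
      min (v i x) (v i y) ≤ v i (x + y))
    (hvsurj : ∀ i, ∀ z : ℤ, ∃ x : FractionRing (Polynomial R), x ≠ 0 ∧ v i x = z)
    (hvring : ∀ i, {x : FractionRing (Polynomial R) | x ≠ 0 ∧ 0 ≤ v i x} =
      locSet ((algebraMap (Polynomial R) (FractionRing (Polynomial R))).comp
        (reesAlgebra I).val.toRingHom) (P i) \ {0}) :
    ∃ hQ : (Ideal.comap (reesAlgebra I).val.toRingHom
        (Ideal.span {(X : Polynomial R)})).IsPrime,
      Order.height (⟨Ideal.comap (reesAlgebra I).val.toRingHom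
          (Ideal.span {(X : Polynomial R)}), hQ⟩ :
        PrimeSpectrum ↥(reesAlgebra I)) = 1 ∧
      (∀ i, Ideal.comap (reesAlgebra I).val.toRingHom
        (Ideal.span {(X : Polynomial R)}) ≠ P i) ∧
      Ideal.map (algebraMap R ↥(reesAlgebra I)) I =
        ⨅ i, symbPow (P i) (hP i)
          ((-(v i (algebraMap (Polynomial R) (FractionRing (Polynomial R)) X))).toNat) := by
  classical
  -- a nonzero element of I
  have hI0 : I ≠ ⊥ := by
    intro hh
    set pb : PrimeSpectrum R := ⟨⊥, Ideal.bot_prime⟩ with hpb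
    have h3 := iInf_le (fun p : PrimeSpectrum R => ⨅ (_ : I ≤ p.asIdeal), Order.height p) pb
    have h5 := iInf_le (fun _ : I ≤ pb.asIdeal => Order.height pb) (le_of_eq hh)
    have h4 : Order.height pb = 0 := by
      rw [Order.height_eq_zero]
      intro q _
      show (⊥ : Ideal R) ≤ q.asIdeal
      exact bot_le
    have h6 := le_trans hht (le_trans h3 h5)
    rw [h4] at h6
    norm_num at h6
  obtain ⟨a, haI, ha⟩ := Submodule.exists_mem_ne_zero_of_ne_bot hI0
  set f := (algebraMap (Polynomial R) (FractionRing (Polynomial R))).comp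
    (reesAlgebra I).val.toRingHom with hf
  obtain ⟨hQp, hQh⟩ := rees_Q_prime_height I a haI ha
  refine ⟨hQp, hQh, ?_, ?_⟩
  · -- Q ≠ P i
    intro i hQP
    have h1 : algebraMap R ↥(reesAlgebra I) a ∈ P i := hPI i (Ideal.mem_map_of_mem _ haI)
    rw [← hQP, Ideal.mem_comap, Ideal.mem_span_singleton] at h1
    have h2 := Polynomial.X_dvd_iff.mp h1
    rw [show (reesAlgebra I).val.toRingHom ((algebraMap R ↥(reesAlgebra I)) a) = C a
      from rfl] at h2
    simp at h2
    exact ha h2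
  · -- main equality
    letI : Algebra ↥(reesAlgebra I) (FractionRing (Polynomial R)) := f.toAlgebra
    haveI hfr : IsFractionRing ↥(reesAlgebra I) (FractionRing (Polynomial R)) :=
      reesAlgebra_isFractionRing a haI ha
    have halg : algebraMap ↥(reesAlgebra I) (FractionRing (Polynomial R)) = f := rfl
    have hPinj : Function.Injective (algebraMap (Polynomial R) (FractionRing (Polynomial R))) :=
      IsFractionRing.injective _ _
    have hinj : Function.Injective f := fun x y hxy => Subtype.ext (hPinj hxy)
    set Xb := algebraMap (Polynomial R) (FractionRing (Polynomial R)) X with hXb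
    have hXb0 : Xb ≠ 0 := by
      rw [hXb]
      intro hh
      have h2 := hPinj (by rwa [map_zero] : algebraMap (Polynomial R)
        (FractionRing (Polynomial R)) X = algebraMap (Polynomial R)
        (FractionRing (Polynomial R)) 0)
      exact Polynomial.X_ne_zero h2
    have hbridge : ∀ i (x : ↥(reesAlgebra I)) (d : ℕ),
        x ∈ symbPow (P i) (hP i) d ↔ (x = 0 ∨ (d : ℤ) ≤ v i (f x)) := by
      intro i x d
      exact symbPow_eq_val (L := FractionRing (Polynomial R)) hinj (P i) (hP i) (v i)
        (hvmul i) (hvadd i) (hvsurj i) (hvring i) d x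
    have hvnn : ∀ (i) (z : ↥(reesAlgebra I)), z ≠ 0 → 0 ≤ v i (f z) := by
      intro i z hz
      have hfz : f z ≠ 0 := fun hh => hz (hinj (by rwa [map_zero]))
      have hmem : f z ∈ locSet f (P i) \ {0} := by
        refine ⟨⟨z, 1, ?_, by rw [map_one, mul_one]⟩, hfz⟩
        exact fun h1 => (hP i).ne_top (Ideal.eq_top_iff_one _ |>.mpr h1)
      rw [← hvring i] at hmem
      exact hmem.2
    have hCmem : ∀ c : R, c ∈ I → C c * X ∈ reesAlgebra I := by
      intro c hc
      rw [Polynomial.C_mul_X_eq_monomial, reesAlgebra.monomial_mem, pow_one]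
      exact hc
    have hfmul : ∀ (c : R) (hc : C c * X ∈ reesAlgebra I) (z : ↥(reesAlgebra I)),
        f ((⟨C c * X, hc⟩ : ↥(reesAlgebra I)) * z) =
          f (algebraMap R ↥(reesAlgebra I) c) * (Xb * f z) := by
      intro c hc z
      have h1 : f ((⟨C c * X, hc⟩ : ↥(reesAlgebra I)) * z) =
          algebraMap (Polynomial R) (FractionRing (Polynomial R))
            (C c * X * (z : Polynomial R)) := rfl
      have h2 : f (algebraMap R ↥(reesAlgebra I) c) =
          algebraMap (Polynomial R) (FractionRing (Polynomial R)) (C c) := rfl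
      rw [h1, h2, map_mul, map_mul, mul_assoc]
      rfl
    apply le_antisymm
    · -- map I ≤ ⨅ symbPow
      apply le_iInf
      intro i
      rw [Ideal.map_le_iff_le_comap]
      intro r hr
      rw [Ideal.mem_comap, hbridge i]
      rcases eq_or_ne (algebraMap R ↥(reesAlgebra I) r) 0 with h | h
      · exact Or.inl h
      right
      have hfcr0 : f (algebraMap R ↥(reesAlgebra I) r) ≠ 0 :=
        fun hh => h (hinj (by rwa [map_zero]))
      have hrXmem : C r * X ∈ reesAlgebra I := hCmem r hr
      have h2 := hfmul r hrXmem 1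
      rw [mul_one, map_one, mul_one] at h2
      have hrX0 : (⟨C r * X, hrXmem⟩ : ↥(reesAlgebra I)) ≠ 0 := by
        intro hh
        have h1 : f (⟨C r * X, hrXmem⟩ : ↥(reesAlgebra I)) = 0 := by rw [hh, map_zero]
        rw [h2] at h1
        rcases mul_eq_zero.mp h1 with h3 | h3
        · exact hfcr0 h3
        · exact hXb0 h3
      have h1 : 0 ≤ v i (f (⟨C r * X, hrXmem⟩ : ↥(reesAlgebra I))) := hvnn i _ hrX0
      rw [h2, hvmul i _ _ hfcr0 hXb0] at h1
      have h3 : 0 ≤ v i (f (algebraMap R ↥(reesAlgebra I) r)) := hvnn i _ h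
      omega
    · -- ⨅ symbPow ≤ map I
      intro x hx
      rcases eq_or_ne x 0 with h | h
      · rw [h]; exact Ideal.zero_mem _
      rw [Ideal.mem_iInf] at hx
      have hfx0 : f x ≠ 0 := fun hh => h (hinj (by rwa [map_zero]))
      have hy0 : Xb * f x ≠ 0 := mul_ne_zero hXb0 hfx0
      have haXmem : C a * X ∈ reesAlgebra I := hCmem a haI
      have halga0 : algebraMap R ↥(reesAlgebra I) a ≠ 0 := by
        intro hh
        apply ha
        have h1 : ((algebraMap R ↥(reesAlgebra I) a : ↥(reesAlgebra I)) : Polynomial R)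
            = C a := rfl
        rw [hh] at h1
        have h2 : (0 : Polynomial R) = C a := h1
        have h3 := congrArg (fun p => Polynomial.coeff p 0) h2
        simpa using h3.symm
      have hyeq : (Xb * f x) * algebraMap ↥(reesAlgebra I) (FractionRing (Polynomial R))
            (algebraMap R ↥(reesAlgebra I) a) =
          algebraMap ↥(reesAlgebra I) (FractionRing (Polynomial R))
            ((⟨C a * X, haXmem⟩ : ↥(reesAlgebra I)) * x) := by
        rw [halg, hfmul a haXmem x]
        ring
      have hloc : ∀ (Pp : Ideal ↥(reesAlgebra I)) (hPp : Pp.IsPrime),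
          Order.height (⟨Pp, hPp⟩ : PrimeSpectrum ↥(reesAlgebra I)) = 1 →
          (Xb * f x) ∈ locSet (algebraMap ↥(reesAlgebra I) (FractionRing (Polynomial R))) Pp := by
        intro Pp hPp hht1
        by_cases hIP : Ideal.map (algebraMap R ↥(reesAlgebra I)) I ≤ Pp
        · obtain ⟨i, hPpi⟩ := hall Pp hPp hht1 hIP
          subst hPpi
          have hd := (hbridge i x _).mp (hx i)
          rcases hd with h' | hd
          · exact absurd h' h
          have hvy : 0 ≤ v i (Xb * f x) := by
            rw [hvmul i _ _ hXb0 hfx0]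
            omega
          have hmem : (Xb * f x) ∈ {z : FractionRing (Polynomial R) | z ≠ 0 ∧ 0 ≤ v i z} :=
            ⟨hy0, hvy⟩
          rw [hvring i] at hmem
          exact hmem.1
        · have hex : ∃ c ∈ I, algebraMap R ↥(reesAlgebra I) c ∉ Pp := by
            by_contra hcc
            push_neg at hcc
            apply hIP
            rw [Ideal.map_le_iff_le_comap]
            intro c hc
            exact hcc c hc
          obtain ⟨c, hcI, hc⟩ := hex
          have hcXmem : C c * X ∈ reesAlgebra I := hCmem c hcI
          refine ⟨(⟨C c * X, hcXmem⟩ : ↥(reesAlgebra I)) * x,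
            algebraMap R ↥(reesAlgebra I) c, hc, ?_⟩
          rw [halg, hfmul c hcXmem x]
          ring
      obtain ⟨q, hq⟩ := div_mem_of_height_one (algebraMap R ↥(reesAlgebra I) a)
        ((⟨C a * X, haXmem⟩ : ↥(reesAlgebra I)) * x) halga0 (Xb * f x) hyeq hloc
      have hq2 : (q : Polynomial R) = X * (x : Polynomial R) := by
        apply hPinj
        rw [map_mul]
        have h1 : algebraMap (Polynomial R) (FractionRing (Polynomial R)) (q : Polynomial R)
            = f q := rfl
        have h2 : algebraMap (Polynomial R) (FractionRing (Polynomial R)) (x : Polynomial R)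
            = f x := rfl
        rw [h1, h2, ← halg, ← hq, hXb]
        rfl
      apply mem_map_of_coeff
      intro m
      have h1 : (x : Polynomial R).coeff m = (q : Polynomial R).coeff (m + 1) := by
        rw [hq2, Polynomial.coeff_X_mul]
      rw [h1]
      exact q.2 (m + 1)
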